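/- arXiv:2512.24910 — 5 statements merged into one kernel-verified Lean document; each statement's English description precedes it below -/
import Mathlib

section
/- Let π be a probability mass function on ℕ with finite λ-moments for λ ≤ λ′, and I ⊆ ℕ. Then π^λ(·|I) is stochastically dominated by π^{λ′}(·|I): for every m, Σ_{k ≥ m, k ∈ I} π^λ(k|I) ≤ Σ_{k ≥ m, k ∈ I} π^{λ′}(k|I). -/
/-!
Conditioning `π^λ` on `I` is tilting the weights `1_I π` by `λ`, and the tilted weights
`λ^k a_k` and `λ′^k a_k` have a monotone likelihood ratio `(λ′/λ)^k`. Splitting each total mass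
at `m` into tail `T` and head `F`, the ratio property gives `T F′ ≤ T′ F` term by term,
which is the cross-multiplied form of `T / (T + F) ≤ T′ / (T′ + F′)`.
-/

open scoped BigOperators
open scoped Classical

/-- The `l`-tilted measure of a pmf `π` on `ℕ`. -/
noncomputable def tilt (π : ℕ → ℝ) (l : ℝ) (k : ℕ) : ℝ :=
  l ^ k * π k / (∑' j : ℕ, l ^ j * π j)

/-- The `l`-tilted measure conditioned on the set `I`. -/
noncomputable def condTilt (π : ℕ → ℝ) (l : ℝ) (I : Set ℕ) (k : ℕ) : ℝ :=
  (if k ∈ I then tilt π l k else 0) / (∑' j : ℕ, if j ∈ I then tilt π l j else 0)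

open Finset

/-- `w' k / w k` is nondecreasing in `k`, cross-multiplied so that zero weights are allowed. -/
def MonotoneLikelihoodRatio (w w' : ℕ → ℝ) : Prop :=
  ∀ j k, j ≤ k → w k * w' j ≤ w' k * w j

lemma Summable.ite_le {f : ℕ → ℝ} (hf : Summable f) (m : ℕ) :
    Summable fun k => if m ≤ k then f k else 0 :=
  (hf.indicator {k | m ≤ k}).congr fun k => by simp [Set.indicator_apply]

lemma Summable.tsum_eq_tsum_ite_le_add_sum_range {f : ℕ → ℝ} (hf : Summable f) (m : ℕ) :
    ∑' k, f k = (∑' k, if m ≤ k then f k else 0) + ∑ k ∈ range m, f k := by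
  rw [← hf.sum_add_tsum_compl (s := range m), add_comm, _root_.tsum_subtype]
  congr 2 with k
  simp [Set.indicator_apply]

lemma MonotoneLikelihoodRatio.tsum_ite_le_mul_sum_range_le {w w' : ℕ → ℝ}
    (h : MonotoneLikelihoodRatio w w') (hw : Summable w) (hw' : Summable w') (m : ℕ) :
    (∑' k, if m ≤ k then w k else 0) * ∑ j ∈ range m, w' j ≤
      (∑' k, if m ≤ k then w' k else 0) * ∑ j ∈ range m, w j := by
  rw [← tsum_mul_right, ← tsum_mul_right]
  refine Summable.tsum_le_tsum (fun k => ?_) ((hw.ite_le m).mul_right _)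
    ((hw'.ite_le m).mul_right _)
  split_ifs with hk
  · rw [mul_sum, mul_sum]
    exact sum_le_sum fun j hj => h j k (by rw [mem_range] at hj; omega)
  · simp

theorem MonotoneLikelihoodRatio.tsum_ite_le_div_tsum_le {w w' : ℕ → ℝ}
    (h : MonotoneLikelihoodRatio w w') (hS : 0 < ∑' k, w k) (hS' : 0 < ∑' k, w' k) (m : ℕ) :
    (∑' k, if m ≤ k then w k else 0) / ∑' k, w k ≤
      (∑' k, if m ≤ k then w' k else 0) / ∑' k, w' k := by
  have hw : Summable w := by
    by_contra hw
    exact hS.ne' (tsum_eq_zero_of_not_summable hw)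
  have hw' : Summable w' := by
    by_contra hw'
    exact hS'.ne' (tsum_eq_zero_of_not_summable hw')
  have cross := h.tsum_ite_le_mul_sum_range_le hw hw' m
  rw [div_le_div_iff₀ hS hS', hw.tsum_eq_tsum_ite_le_add_sum_range m,
    hw'.tsum_eq_tsum_ite_le_add_sum_range m, mul_add, mul_add]
  linarith [mul_comm (∑' k, if m ≤ k then w k else 0) (∑' k, if m ≤ k then w' k else 0)]

lemma pow_mul_pow_le_pow_mul_pow {l l' : ℝ} (hl : 0 ≤ l) (hll' : l ≤ l') {j k : ℕ}
    (hjk : j ≤ k) : l ^ k * l' ^ j ≤ l' ^ k * l ^ j := by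
  obtain ⟨d, rfl⟩ := Nat.exists_eq_add_of_le hjk
  calc l ^ (j + d) * l' ^ j = l ^ j * l' ^ j * l ^ d := by ring
    _ ≤ l ^ j * l' ^ j * l' ^ d :=
      mul_le_mul_of_nonneg_left (pow_le_pow_left₀ hl hll' d)
        (mul_nonneg (pow_nonneg hl j) (pow_nonneg (hl.trans hll') j))
    _ = l' ^ (j + d) * l ^ j := by ring

lemma monotoneLikelihoodRatio_pow_mul {a : ℕ → ℝ} (ha : ∀ k, 0 ≤ a k) {l l' : ℝ} (hl : 0 ≤ l)
    (hll' : l ≤ l') :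
    MonotoneLikelihoodRatio (fun k => l ^ k * a k) (fun k => l' ^ k * a k) := by
  intro j k hjk
  calc l ^ k * a k * (l' ^ j * a j) = l ^ k * l' ^ j * (a k * a j) := by ring
    _ ≤ l' ^ k * l ^ j * (a k * a j) :=
      mul_le_mul_of_nonneg_right (pow_mul_pow_le_pow_mul_pow hl hll' hjk) (mul_nonneg (ha k) (ha j))
    _ = l' ^ k * a k * (l ^ j * a j) := by ring

section CondTilt

variable {π : ℕ → ℝ} {t : ℝ} {I : Set ℕ}

lemma ite_mem_tilt (k : ℕ) :
    (if k ∈ I then tilt π t k else 0) = t ^ k * I.indicator π k / ∑' j, t ^ j * π j := by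
  by_cases hk : k ∈ I <;> simp [tilt, hk]

lemma tsum_ite_mem_tilt :
    (∑' j, if j ∈ I then tilt π t j else 0) =
      (∑' j, t ^ j * I.indicator π j) / ∑' j, t ^ j * π j := by
  simp only [ite_mem_tilt, tsum_div_const]

lemma condTilt_eq (hI : (∑' j, if j ∈ I then tilt π t j else 0) ≠ 0) (k : ℕ) :
    condTilt π t I k = t ^ k * I.indicator π k / ∑' j, t ^ j * I.indicator π j := by
  have hZ : (∑' j, t ^ j * π j) ≠ 0 := by
    intro hZ
    rw [tsum_ite_mem_tilt, hZ, div_zero] at hI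
    exact hI rfl
  rw [condTilt, tsum_ite_mem_tilt, ite_mem_tilt, div_div_div_cancel_right₀ hZ]

lemma tsum_ite_le_condTilt (hI : (∑' j, if j ∈ I then tilt π t j else 0) ≠ 0) (m : ℕ) :
    (∑' k, if m ≤ k then condTilt π t I k else 0) =
      (∑' k, if m ≤ k then t ^ k * I.indicator π k else 0) / ∑' k, t ^ k * I.indicator π k := by
  rw [← tsum_div_const]
  congr 1 with k
  split_ifs
  · exact condTilt_eq hI k
  · rw [zero_div]

lemma tsum_pow_mul_indicator_pos (hπ0 : ∀ k, 0 ≤ π k) (ht : 0 ≤ t)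
    (hI : 0 < ∑' j, if j ∈ I then tilt π t j else 0) :
    0 < ∑' j, t ^ j * I.indicator π j := by
  have hZ : 0 ≤ ∑' j, t ^ j * π j := tsum_nonneg fun j => mul_nonneg (pow_nonneg ht j) (hπ0 j)
  rw [tsum_ite_mem_tilt] at hI
  exact ((div_pos_iff.mp hI).resolve_right fun h => h.2.not_ge hZ).1

end CondTilt

theorem condTilt_stochastic_order_general (π : ℕ → ℝ)
    (hπ0 : ∀ k, 0 ≤ π k)
    (l l' : ℝ) (hl : 0 < l) (hll' : l ≤ l')
    (I : Set ℕ)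
    (hI : 0 < ∑' j : ℕ, if j ∈ I then tilt π l j else 0)
    (hI' : 0 < ∑' j : ℕ, if j ∈ I then tilt π l' j else 0) :
    ∀ m : ℕ,
      (∑' k : ℕ, if m ≤ k then condTilt π l I k else 0) ≤
        ∑' k : ℕ, if m ≤ k then condTilt π l' I k else 0 := by
  intro m
  have hA : ∀ k, 0 ≤ I.indicator π k := Set.indicator_nonneg fun k _ => hπ0 k
  rw [tsum_ite_le_condTilt hI.ne', tsum_ite_le_condTilt hI'.ne']
  exact (monotoneLikelihoodRatio_pow_mul hA hl.le hll').tsum_ite_le_div_tsum_le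
    (tsum_pow_mul_indicator_pos hπ0 hl.le hI)
    (tsum_pow_mul_indicator_pos hπ0 (hl.le.trans hll') hI') m

/-- Stochastic domination of conditioned tilted measures: for `0 < λ ≤ λ′`
with finite moments, `π^λ(·|I)` is stochastically dominated by `π^{λ′}(·|I)`:
for every `m`, `∑_{k ≥ m} π^λ(k|I) ≤ ∑_{k ≥ m} π^{λ′}(k|I)`. -/
theorem condTilt_stochastic_order (π : ℕ → ℝ)
    (hπ0 : ∀ k, 0 ≤ π k) (hπ1 : HasSum π 1)
    (l l' : ℝ) (hl : 0 < l) (hll' : l ≤ l')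
    (hZ : Summable (fun k : ℕ => l ^ k * π k))
    (hZ' : Summable (fun k : ℕ => l' ^ k * π k))
    (I : Set ℕ)
    (hI : 0 < ∑' j : ℕ, if j ∈ I then tilt π l j else 0)
    (hI' : 0 < ∑' j : ℕ, if j ∈ I then tilt π l' j else 0) :
    ∀ m : ℕ,
      (∑' k : ℕ, if m ≤ k then condTilt π l I k else 0) ≤
        ∑' k : ℕ, if m ≤ k then condTilt π l' I k else 0 :=
  condTilt_stochastic_order_general π hπ0 l l' hl hll' I hI hI'
end

section
/- (Efron's theorem, n = 2, discrete case) Let ν₁, ν₂ be log-concave probability mass functions on ℕ and X₁, X₂ independent with laws ν₁, ν₂. Then for each k with P(X₁+X₂ = k) > 0 and P(X₁+X₂ = k+1) > 0, the conditional law of X₁ given X₁+X₂ = k is stochastically dominated by the conditional law of X₁ given X₁+X₂ = k+1: for all m, P(X₁ ≥ m | X₁+X₂ = k) ≤ P(X₁ ≥ m | X₁+X₂ = k+1). -/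
/-!
Given `X₁ + X₂ = k`, `X₁` has weights `ν₁ x ν₂ (k - x)`. Log-concavity of `ν₂` makes
`ν₂ (k - x + 1) / ν₂ (k - x)` nondecreasing in `x`, so the weights at `k + 1` have a
nondecreasing likelihood ratio against those at `k`. Such a ratio gives stochastic domination:
expanding both products of sums, only the cross terms `a x b y ≤ b x a y` with `y < m ≤ x`
survive.
-/

open scoped BigOperators
open scoped Classical

/-- A log-concave probability mass function on `ℕ`: nonnegative, positive on
the initial segment of its support, and `ν(x)ν(x+2) ≤ ν(x+1)²`. -/
def LogConcavePMF (ν : ℕ → ℝ) : Prop :=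
  (∀ x, 0 ≤ ν x) ∧
  (∀ x y : ℕ, x ≤ y → 0 < ν y → 0 < ν x) ∧
  (∀ x : ℕ, ν x * ν (x + 2) ≤ ν (x + 1) ^ 2)

open Finset

theorem LogConcavePMF.mul_succ_le_succ_mul {ν : ℕ → ℝ} (h : LogConcavePMF ν) {u v : ℕ}
    (huv : u ≤ v) : ν u * ν (v + 1) ≤ ν (u + 1) * ν v := by
  obtain ⟨hnonneg, hsupp, hlc⟩ := h
  induction v, huv using Nat.le_induction with
  | base => rw [mul_comm]
  | succ v _ ih =>
    rcases (hnonneg (v + 1)).eq_or_lt with hzero | hpos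
    · have hvanish : ν (v + 1 + 1) = 0 := by
        by_contra hne
        exact (hsupp _ _ (Nat.le_succ _) ((hnonneg _).lt_of_ne' hne)).ne' hzero.symm
      rw [hvanish, ← hzero, mul_zero, mul_zero]
    · refine le_of_mul_le_mul_right ?_ hpos
      calc ν u * ν (v + 1 + 1) * ν (v + 1) = ν u * ν (v + 1) * ν (v + 2) := by ring
        _ ≤ ν (u + 1) * ν v * ν (v + 2) := mul_le_mul_of_nonneg_right ih (hnonneg _)
        _ = ν (u + 1) * (ν v * ν (v + 2)) := by ring
        _ ≤ ν (u + 1) * ν (v + 1) ^ 2 := mul_le_mul_of_nonneg_left (hlc v) (hnonneg _)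
        _ = ν (u + 1) * ν (v + 1) * ν (v + 1) := by ring

theorem Finset.sum_filter_mul_sum_le {ι R : Type*} [CommSemiring R] [PartialOrder R]
    [IsOrderedRing R] (s : Finset ι) (p : ι → Prop) [DecidablePred p] {a b : ι → R}
    (h : ∀ x ∈ s, ∀ y ∈ s, p x → ¬ p y → a x * b y ≤ b x * a y) :
    (∑ x ∈ s with p x, a x) * ∑ x ∈ s, b x ≤ (∑ x ∈ s with p x, b x) * ∑ x ∈ s, a x := by
  have hcross : (∑ x ∈ s with p x, a x) * ∑ y ∈ s with ¬ p y, b y ≤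
      (∑ x ∈ s with p x, b x) * ∑ y ∈ s with ¬ p y, a y := by
    simp only [sum_mul_sum]
    refine sum_le_sum fun x hx => sum_le_sum fun y hy => ?_
    rw [mem_filter] at hx hy
    exact h x hx.1 y hy.1 hx.2 hy.2
  rw [← sum_filter_add_sum_filter_not s p b, ← sum_filter_add_sum_filter_not s p a,
    mul_add, mul_add, mul_comm (∑ x ∈ s with p x, a x)]
  exact add_le_add le_rfl hcross

section JointMass

variable (ν₁ ν₂ : ℕ → ℝ)

/-- `P(X₁ = x, X₁ + X₂ = k)`; the guard `x ≤ k` keeps the truncated `k - x` out of play. -/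
def jointMass (k x : ℕ) : ℝ :=
  if x ≤ k then ν₁ x * ν₂ (k - x) else 0

variable {ν₁ ν₂}

theorem jointMass_nonneg (h₁ : ∀ x, 0 ≤ ν₁ x) (h₂ : ∀ x, 0 ≤ ν₂ x) (k x : ℕ) :
    0 ≤ jointMass ν₁ ν₂ k x := by
  unfold jointMass
  split_ifs
  exacts [mul_nonneg (h₁ _) (h₂ _), le_rfl]

theorem sum_range_filter_jointMass (p : ℕ → Prop) [DecidablePred p] {k n : ℕ} (hkn : k < n) :
    ∑ x ∈ range n with p x, jointMass ν₁ ν₂ k x =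
      ∑ x ∈ range (k + 1), if p x then ν₁ x * ν₂ (k - x) else 0 := by
  rw [sum_filter, ← sum_range_add_sum_Ico _ hkn, add_eq_left.mpr]
  · refine sum_congr rfl fun x hx => ?_
    rw [jointMass, if_pos (mem_range_succ_iff.mp hx)]
  · refine sum_eq_zero fun x hx => ?_
    rw [jointMass, if_neg (show ¬x ≤ k by rw [mem_Ico] at hx; omega), ite_self]

theorem sum_range_jointMass {k n : ℕ} (hkn : k < n) :
    ∑ x ∈ range n, jointMass ν₁ ν₂ k x = ∑ x ∈ range (k + 1), ν₁ x * ν₂ (k - x) := by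
  simpa using sum_range_filter_jointMass (ν₁ := ν₁) (ν₂ := ν₂) (fun _ => True) hkn

theorem jointMass_mul_jointMass_succ_le (h₁ : ∀ x, 0 ≤ ν₁ x) (h₂ : LogConcavePMF ν₂) {k x y : ℕ}
    (hyx : y < x) :
    jointMass ν₁ ν₂ k x * jointMass ν₁ ν₂ (k + 1) y ≤
      jointMass ν₁ ν₂ (k + 1) x * jointMass ν₁ ν₂ k y := by
  have hnonneg := jointMass_nonneg h₁ h₂.1
  by_cases hxk : x ≤ k
  · have hyk : y ≤ k := by omega
    have hratio := h₂.mul_succ_le_succ_mul (Nat.sub_le_sub_left hyx.le k)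
    rw [show k - y + 1 = k + 1 - y by omega, show k - x + 1 = k + 1 - x by omega] at hratio
    simp only [jointMass, if_pos hxk, if_pos hyk, if_pos (hxk.trans k.le_succ),
      if_pos (hyk.trans k.le_succ)]
    calc ν₁ x * ν₂ (k - x) * (ν₁ y * ν₂ (k + 1 - y))
        = ν₁ x * ν₁ y * (ν₂ (k - x) * ν₂ (k + 1 - y)) := by ring
      _ ≤ ν₁ x * ν₁ y * (ν₂ (k + 1 - x) * ν₂ (k - y)) :=
        mul_le_mul_of_nonneg_left hratio (mul_nonneg (h₁ x) (h₁ y))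
      _ = ν₁ x * ν₂ (k + 1 - x) * (ν₁ y * ν₂ (k - y)) := by ring
  · rw [jointMass, if_neg hxk, zero_mul]
    exact mul_nonneg (hnonneg _ _) (hnonneg _ _)

end JointMass

theorem efron_two_general (ν₁ ν₂ : ℕ → ℝ)
    (h₁ : LogConcavePMF ν₁) (h₂ : LogConcavePMF ν₂)
    (k : ℕ)
    (hk : 0 < ∑ x ∈ Finset.range (k + 1), ν₁ x * ν₂ (k - x))
    (hk' : 0 < ∑ x ∈ Finset.range (k + 2), ν₁ x * ν₂ (k + 1 - x)) :
    ∀ m : ℕ,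
      (∑ x ∈ Finset.range (k + 1), if m ≤ x then ν₁ x * ν₂ (k - x) else 0) /
          (∑ x ∈ Finset.range (k + 1), ν₁ x * ν₂ (k - x)) ≤
        (∑ x ∈ Finset.range (k + 2), if m ≤ x then ν₁ x * ν₂ (k + 1 - x) else 0) /
          (∑ x ∈ Finset.range (k + 2), ν₁ x * ν₂ (k + 1 - x)) := by
  intro m
  have hcross := sum_filter_mul_sum_le (range (k + 2)) (m ≤ ·) fun x _ y _ hmx hmy =>
    jointMass_mul_jointMass_succ_le (k := k) h₁.1 h₂ ((not_le.mp hmy).trans_le hmx)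
  have hlt : k < k + 2 := by omega
  rw [sum_range_filter_jointMass _ hlt, sum_range_jointMass hlt,
    sum_range_filter_jointMass _ (k + 1).lt_succ_self,
    sum_range_jointMass (k + 1).lt_succ_self] at hcross
  exact (div_le_div_iff₀ hk hk').mpr hcross

/-- Efron's theorem for `n = 2`, discrete case: if `X₁, X₂` are independent
with log-concave laws `ν₁, ν₂` on `ℕ`, then for `k` with
`P(X₁+X₂ = k) > 0` and `P(X₁+X₂ = k+1) > 0`, the conditional law of `X₁`
given `X₁+X₂ = k` is stochastically dominated by the conditional law given
`X₁+X₂ = k+1`: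
`P(X₁ ≥ m | X₁+X₂ = k) ≤ P(X₁ ≥ m | X₁+X₂ = k+1)` for all `m`. -/
theorem efron_two (ν₁ ν₂ : ℕ → ℝ)
    (h₁ : LogConcavePMF ν₁) (h₂ : LogConcavePMF ν₂)
    (h₁s : HasSum ν₁ 1) (h₂s : HasSum ν₂ 1) (k : ℕ)
    (hk : 0 < ∑ x ∈ Finset.range (k + 1), ν₁ x * ν₂ (k - x))
    (hk' : 0 < ∑ x ∈ Finset.range (k + 2), ν₁ x * ν₂ (k + 1 - x)) :
    ∀ m : ℕ,
      (∑ x ∈ Finset.range (k + 1), if m ≤ x then ν₁ x * ν₂ (k - x) else 0) /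
          (∑ x ∈ Finset.range (k + 1), ν₁ x * ν₂ (k - x)) ≤
        (∑ x ∈ Finset.range (k + 2), if m ≤ x then ν₁ x * ν₂ (k + 1 - x) else 0) /
          (∑ x ∈ Finset.range (k + 2), ν₁ x * ν₂ (k + 1 - x)) :=
  efron_two_general ν₁ ν₂ h₁ h₂ k hk hk'
end

section
/- (Efron's theorem, general n, discrete case) Let ν₁,…,νₙ be log-concave probability mass functions on ℕ and X₁,…,Xₙ independent with laws νᵢ. Then the canonical measures μₙ(·|k) (law of (X₁,…,Xₙ) conditioned on X₁+⋯+Xₙ = k) are stochastically increasing in k: for every k with both μₙ(·|k) and μₙ(·|k+1) well-defined, and every coordinatewise-increasing bounded function f : ℕⁿ → ℝ, E[f(𝐗ₙ) | Sₙ = k] ≤ E[f(𝐗ₙ) | Sₙ = k+1]. -/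
/-- Law of the sum of `n` independent variables with marginals `ν i`. -/
noncomputable def sumLaw {n : ℕ} (ν : Fin n → ℕ → ℝ) (k : ℕ) : ℝ :=
  ∑' y : Fin n → ℕ, if (∑ i, y i) = k then ∏ i, ν i (y i) else 0

open Finset

theorem LogConcavePMF.mul_succ_le_succ_mul_s8 {a : ℕ → ℝ} (ha : LogConcavePMF a) {p q : ℕ}
    (hpq : p ≤ q) : a p * a (q + 1) ≤ a (p + 1) * a q := by
  obtain ⟨hnn, hdown, hlc⟩ := ha
  obtain ⟨d, rfl⟩ := Nat.exists_eq_add_of_le hpq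
  clear hpq
  induction d with
  | zero => exact (mul_comm _ _).le
  | succ d ih =>
    rcases (hnn (p + d + 2)).eq_or_lt with h0 | hpos
    · rw [show p + (d + 1) + 1 = p + d + 2 by ring, ← h0, mul_zero]
      exact mul_nonneg (hnn _) (hnn _)
    · have hmid : 0 < a (p + d + 1) := hdown _ _ (by omega) hpos
      refine le_of_mul_le_mul_right ?_ hmid
      calc a p * a (p + (d + 1) + 1) * a (p + d + 1)
          = a p * a (p + d + 1) * a (p + d + 2) := by ring_nf
        _ ≤ a (p + 1) * a (p + d) * a (p + d + 2) :=
          mul_le_mul_of_nonneg_right ih (hnn _)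
        _ = a (p + 1) * (a (p + d) * a (p + d + 2)) := by ring
        _ ≤ a (p + 1) * a (p + d + 1) ^ 2 := mul_le_mul_of_nonneg_left (hlc _) (hnn _)
        _ = a (p + 1) * a (p + (d + 1)) * a (p + d + 1) := by ring_nf

theorem sum_mul_sum_le_of_minors_nonneg {ι : Type*} (I : Finset ι) (x y s t : ι → ℝ)
    (h : ∀ i ∈ I, ∀ j ∈ I, 0 ≤ (x i * y j - x j * y i) * (s i * t j - s j * t i)) :
    (∑ i ∈ I, x i * t i) * (∑ i ∈ I, y i * s i) ≤
      (∑ i ∈ I, x i * s i) * (∑ i ∈ I, y i * t i) := by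
  have expand : ∑ i ∈ I, ∑ j ∈ I, (x i * y j - x j * y i) * (s i * t j - s j * t i) =
      2 * ((∑ i ∈ I, x i * s i) * (∑ i ∈ I, y i * t i) -
        (∑ i ∈ I, x i * t i) * (∑ i ∈ I, y i * s i)) := by
    set G : ι → ι → ℝ := fun i j => x i * s i * (y j * t j) - x i * t i * (y j * s j)
    calc ∑ i ∈ I, ∑ j ∈ I, (x i * y j - x j * y i) * (s i * t j - s j * t i)
        = ∑ i ∈ I, ∑ j ∈ I, G i j + ∑ i ∈ I, ∑ j ∈ I, G j i := by
          simp only [G, ← sum_add_distrib]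
          exact sum_congr rfl fun i _ => sum_congr rfl fun j _ => by ring
      _ = 2 * ∑ i ∈ I, ∑ j ∈ I, G i j := by rw [sum_comm (f := fun i j => G j i)]; ring
      _ = _ := by
          rw [sum_mul_sum, sum_mul_sum, ← sum_sub_distrib]
          simp only [G, ← sum_sub_distrib]
  have := sum_nonneg fun i hi => sum_nonneg fun j hj => h i hi j hj
  linarith

noncomputable def conv (a b : ℕ → ℝ) (k : ℕ) : ℝ := ∑ x ∈ antidiagonal k, a x.1 * b x.2

theorem sum_range_ite_le_eq_sum_antidiagonal {M : Type*} [AddCommMonoid M] {k N : ℕ}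
    (hkN : k < N) (g : ℕ → ℕ → M) :
    ∑ t ∈ range N, (if t ≤ k then g t (k - t) else 0) = ∑ x ∈ antidiagonal k, g x.1 x.2 := by
  rw [← sum_filter, Nat.sum_antidiagonal_eq_sum_range_succ_mk]
  congr 1
  ext t
  simp only [mem_filter, mem_range]
  omega

theorem conv_nonneg {a b : ℕ → ℝ} (ha : ∀ i, 0 ≤ a i) (hb : ∀ i, 0 ≤ b i) (k : ℕ) :
    0 ≤ conv a b k :=
  sum_nonneg fun _ _ => mul_nonneg (ha _) (hb _)

theorem conv_pos_of_le {a b : ℕ → ℝ} (ha : LogConcavePMF a) (hb : LogConcavePMF b) {x y : ℕ}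
    (hxy : x ≤ y) (hy : 0 < conv a b y) : 0 < conv a b x := by
  obtain ⟨⟨i, j⟩, hij, hpos⟩ : ∃ p ∈ antidiagonal y, (0 : ℝ) < a p.1 * b p.2 :=
    exists_lt_of_sum_lt (f := fun _ => 0) (by rwa [sum_const_zero])
  rw [HasAntidiagonal.mem_antidiagonal] at hij
  have hai : 0 < a i := pos_of_mul_pos_left hpos (hb.1 j)
  have hbj : 0 < b j := pos_of_mul_pos_right hpos (ha.1 i)
  calc 0 < a (min i x) * b (x - min i x) :=
        mul_pos (ha.2.1 _ _ (min_le_left i x) hai) (hb.2.1 _ _ (by omega) hbj)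
    _ ≤ conv a b x :=
        single_le_sum (f := fun p : ℕ × ℕ => a p.1 * b p.2)
          (fun p _ => mul_nonneg (ha.1 _) (hb.1 _)) (a := (min i x, x - min i x))
          (HasAntidiagonal.mem_antidiagonal.2 (by dsimp only; omega))

theorem conv_eq_sum_range {a b : ℕ → ℝ} {m N : ℕ} (hmN : m < N) :
    conv a b m = ∑ i ∈ range N, (if i ≤ m then b (m - i) else 0) * a i := by
  simp only [ite_mul, zero_mul, mul_comm (b _)]
  exact (sum_range_ite_le_eq_sum_antidiagonal hmN fun i j => a i * b j).symm

theorem conv_eq_sum_range_shift {a b : ℕ → ℝ} {m N : ℕ} (hmN : m + 1 < N) :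
    conv a b m =
      ∑ i ∈ range N, (if i ≤ m + 1 then b (m + 1 - i) else 0) * if i = 0 then 0 else a (i - 1) := by
  obtain ⟨N, rfl⟩ : ∃ M, N = M + 1 := ⟨N - 1, by omega⟩
  rw [sum_range_succ', conv_eq_sum_range (N := N) (by omega)]
  simp only [Nat.add_sub_cancel, add_le_add_iff_right, Nat.add_sub_add_right, if_true,
    add_eq_zero, one_ne_zero, and_false, if_false, mul_zero, add_zero]

/-- Cauchy–Binet for the `2 × 2` minors of the Toeplitz kernels `(m, i) ↦ b (m - i)` and
`(i, j) ↦ a (i - j)`, both of whose minors are nonnegative by log-concavity. -/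
theorem conv_mul_conv_le_sq {a b : ℕ → ℝ} (ha : LogConcavePMF a) (hb : LogConcavePMF b) (x : ℕ) :
    conv a b x * conv a b (x + 2) ≤ conv a b (x + 1) ^ 2 := by
  set R : ℕ → ℕ → ℝ := fun m i => if i ≤ m then b (m - i) else 0 with hR
  set a' : ℕ → ℝ := fun i => if i = 0 then 0 else a (i - 1) with ha'
  have hRnn : ∀ m i, 0 ≤ R m i := fun m i => by
    simp only [hR]; split_ifs; exacts [hb.1 _, le_rfl]
  have hrows : ∀ i j, i ≤ j → R (x + 1) j * R (x + 2) i ≤ R (x + 1) i * R (x + 2) j := by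
    intro i j hij
    by_cases hj : j ≤ x + 1
    · simp only [hR, if_pos hj, if_pos (show i ≤ x + 1 by omega), if_pos (show i ≤ x + 2 by omega),
        if_pos (show j ≤ x + 2 by omega)]
      have := hb.mul_succ_le_succ_mul_s8 (show x + 1 - j ≤ x + 1 - i by omega)
      rw [show x + 1 - i + 1 = x + 2 - i by omega, show x + 1 - j + 1 = x + 2 - j by omega] at this
      linarith
    · simp only [hR, if_neg hj, zero_mul]
      exact mul_nonneg (hRnn _ _) (hRnn _ _)
  have hcols : ∀ i j, i ≤ j → a j * a' i ≤ a i * a' j := by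
    intro i j hij
    rcases Nat.eq_zero_or_pos i with rfl | hi
    · simp only [ha', if_true, mul_zero]
      split_ifs; exacts [le_of_eq (mul_zero _).symm, mul_nonneg (ha.1 _) (ha.1 _)]
    · simp only [ha', if_neg (show i ≠ 0 by omega), if_neg (show j ≠ 0 by omega)]
      have := ha.mul_succ_le_succ_mul_s8 (show i - 1 ≤ j - 1 by omega)
      rw [Nat.sub_add_cancel hi, Nat.sub_add_cancel (hi.trans_le hij)] at this
      linarith
  have hminor : ∀ i j, i ≤ j →
      0 ≤ (R (x + 1) i * R (x + 2) j - R (x + 1) j * R (x + 2) i) * (a i * a' j - a j * a' i) :=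
    fun i j hij => mul_nonneg (sub_nonneg.2 (hrows i j hij)) (sub_nonneg.2 (hcols i j hij))
  have key := sum_mul_sum_le_of_minors_nonneg (range (x + 3)) (R (x + 1)) (R (x + 2)) a a'
    fun i _ j _ => (le_total i j).elim (hminor i j) fun hji => (hminor j i hji).trans_eq (by ring)
  calc conv a b x * conv a b (x + 2)
      = (∑ i ∈ range (x + 3), R (x + 1) i * a' i) * ∑ i ∈ range (x + 3), R (x + 2) i * a i := by
        rw [conv_eq_sum_range_shift (N := x + 3) (by omega),
          conv_eq_sum_range (N := x + 3) (by omega)]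
    _ ≤ (∑ i ∈ range (x + 3), R (x + 1) i * a i) * ∑ i ∈ range (x + 3), R (x + 2) i * a' i := key
    _ = conv a b (x + 1) ^ 2 := by
        rw [sq, ← conv_eq_sum_range (by omega), ← conv_eq_sum_range_shift (by omega)]

theorem LogConcavePMF.conv {a b : ℕ → ℝ} (ha : LogConcavePMF a) (hb : LogConcavePMF b) :
    LogConcavePMF (conv a b) :=
  ⟨conv_nonneg ha.1 hb.1, fun _ _ hxy hy => conv_pos_of_le ha hb hxy hy, conv_mul_conv_le_sq ha hb⟩

theorem sum_Ico_mul_sum_range_le_of_ratio {x y : ℕ → ℝ}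
    (h : ∀ t s, t ≤ s → y s * x t ≤ x s * y t) (N j : ℕ) :
    (∑ t ∈ Ico j N, y t) * ∑ t ∈ range N, x t ≤ (∑ t ∈ Ico j N, x t) * ∑ t ∈ range N, y t := by
  rcases le_or_gt j N with hjN | hNj
  · have cross : (∑ s ∈ Ico j N, y s) * ∑ t ∈ range j, x t ≤
        (∑ s ∈ Ico j N, x s) * ∑ t ∈ range j, y t := by
      rw [sum_mul_sum, sum_mul_sum]
      refine sum_le_sum fun s hs => sum_le_sum fun t ht => h t s ?_
      rw [mem_Ico] at hs
      rw [mem_range] at ht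
      omega
    rw [← sum_range_add_sum_Ico x hjN, ← sum_range_add_sum_Ico y hjN, mul_add, mul_add,
      mul_comm (∑ t ∈ Ico j N, y t)]
    linarith
  · simp [Ico_eq_empty_of_le hNj.le]

/-- If the law `q` lies stochastically between the law `p` and `p` shifted by one, then
`q = ∑ (λ t + μ t) δ_t` and `p = ∑ (λ t + μ (t + 1)) δ_t` with `λ, μ ≥ 0`; this coupling
compares `u` against `v` only at `t ↦ t` and `t ↦ t + 1`. -/
theorem sum_mul_le_sum_mul_of_tail_le {N : ℕ} {p q u v : ℕ → ℝ}
    (htot : ∑ t ∈ range N, p t = ∑ t ∈ range N, q t)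
    (hpq : ∀ j, ∑ t ∈ Ico j N, p t ≤ ∑ t ∈ Ico j N, q t)
    (hqp : ∀ j, ∑ t ∈ Ico (j + 1) N, q t ≤ ∑ t ∈ Ico j N, p t)
    (huv : ∀ t, 0 < q t → u t ≤ v t) (huv' : ∀ t, u t ≤ v (t + 1)) :
    ∑ t ∈ range N, p t * u t ≤ ∑ t ∈ range N, q t * v t := by
  set P : ℕ → ℝ := fun j => ∑ t ∈ Ico j N, p t with hP
  set Q : ℕ → ℝ := fun j => ∑ t ∈ Ico j N, q t with hQ
  set lam : ℕ → ℝ := fun t => P t - Q (t + 1) with hlam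
  set mu : ℕ → ℝ := fun t => Q t - P t with hmu
  have hp : ∀ t ∈ range N, p t = lam t + mu (t + 1) := fun t ht => by
    simp only [hlam, hmu, hP, sum_eq_sum_Ico_succ_bot (mem_range.1 ht)]
    ring
  have hq : ∀ t ∈ range N, q t = lam t + mu t := fun t ht => by
    simp only [hlam, hmu, hQ, sum_eq_sum_Ico_succ_bot (mem_range.1 ht)]
    ring
  have hmu_ends : mu 0 = 0 ∧ mu N = 0 := by
    simp only [hmu, hP, hQ, ← range_eq_Ico, htot, sub_self, Ico_self, sum_empty, and_self]
  have hmu_shift : ∑ t ∈ range N, mu (t + 1) * v (t + 1) = ∑ t ∈ range N, mu t * v t := by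
    have := (sum_range_succ' (fun t => mu t * v t) N).symm.trans (sum_range_succ _ N)
    simpa only [hmu_ends, zero_mul, add_zero] using this
  have hlam_le : ∀ t ∈ range N, lam t * u t ≤ lam t * v t := fun t ht => by
    have hlam0 : 0 ≤ lam t := sub_nonneg.2 (hqp t)
    rcases lt_or_ge 0 (q t) with hqt | hqt
    · exact mul_le_mul_of_nonneg_left (huv t hqt) hlam0
    · have : lam t = 0 := le_antisymm (by linarith [hq t ht, sub_nonneg.2 (hpq t)]) hlam0
      simp [this]
  calc ∑ t ∈ range N, p t * u t
      = ∑ t ∈ range N, (lam t * u t + mu (t + 1) * u t) :=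
        sum_congr rfl fun t ht => by rw [hp t ht, add_mul]
    _ ≤ ∑ t ∈ range N, (lam t * v t + mu (t + 1) * v (t + 1)) :=
        sum_le_sum fun t ht => add_le_add (hlam_le t ht)
          (mul_le_mul_of_nonneg_left (huv' t) (sub_nonneg.2 (hpq (t + 1))))
    _ = ∑ t ∈ range N, q t * v t := by
        rw [sum_add_distrib, hmu_shift, ← sum_add_distrib]
        exact sum_congr rfl fun t ht => by rw [hq t ht, add_mul]

noncomputable def convTerm (a b : ℕ → ℝ) (K t : ℕ) : ℝ := if t ≤ K then a t * b (K - t) else 0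

section convTerm

variable {a b : ℕ → ℝ}

theorem convTerm_nonneg (ha : ∀ i, 0 ≤ a i) (hb : ∀ i, 0 ≤ b i) (K t : ℕ) :
    0 ≤ convTerm a b K t := by
  unfold convTerm
  split_ifs
  exacts [mul_nonneg (ha _) (hb _), le_rfl]

theorem sum_convTerm {K N : ℕ} (hKN : K < N) : ∑ t ∈ range N, convTerm a b K t = conv a b K :=
  sum_range_ite_le_eq_sum_antidiagonal hKN fun i j => a i * b j

theorem convTerm_ratio_succ (ha : ∀ i, 0 ≤ a i) (hb : LogConcavePMF b) (K : ℕ) {t s : ℕ}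
    (hts : t ≤ s) : convTerm a b K s * convTerm a b (K + 1) t ≤
      convTerm a b (K + 1) s * convTerm a b K t := by
  by_cases hsK : s ≤ K
  · simp only [convTerm, if_pos hsK, if_pos (show s ≤ K + 1 by omega),
      if_pos (show t ≤ K by omega), if_pos (show t ≤ K + 1 by omega)]
    have := hb.mul_succ_le_succ_mul_s8 (show K - s ≤ K - t by omega)
    rw [show K - s + 1 = K + 1 - s by omega, show K - t + 1 = K + 1 - t by omega] at this
    calc _ = (a s * a t) * (b (K - s) * b (K + 1 - t)) := by ring
      _ ≤ (a s * a t) * (b (K + 1 - s) * b (K - t)) :=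
        mul_le_mul_of_nonneg_left this (mul_nonneg (ha s) (ha t))
      _ = _ := by ring
  · simp only [convTerm, if_neg hsK, zero_mul]
    exact mul_nonneg (convTerm_nonneg ha hb.1 _ _) (convTerm_nonneg ha hb.1 _ _)

theorem convTerm_ratio_shift (ha : LogConcavePMF a) (hb : ∀ i, 0 ≤ b i) (K : ℕ) {t s : ℕ}
    (hts : t ≤ s) : convTerm a b (K + 1) (s + 1) * convTerm a b K t ≤
      convTerm a b K s * convTerm a b (K + 1) (t + 1) := by
  by_cases hsK : s ≤ K
  · simp only [convTerm, if_pos hsK, if_pos (show s + 1 ≤ K + 1 by omega),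
      if_pos (show t ≤ K by omega), if_pos (show t + 1 ≤ K + 1 by omega), Nat.add_sub_add_right]
    have := ha.mul_succ_le_succ_mul_s8 hts
    calc _ = (b (K - s) * b (K - t)) * (a t * a (s + 1)) := by ring
      _ ≤ (b (K - s) * b (K - t)) * (a (t + 1) * a s) :=
        mul_le_mul_of_nonneg_left this (mul_nonneg (hb _) (hb _))
      _ = _ := by ring
  · simp only [convTerm, if_neg (show ¬ s + 1 ≤ K + 1 by omega), zero_mul]
    exact mul_nonneg (convTerm_nonneg ha.1 hb _ _) (convTerm_nonneg ha.1 hb _ _)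

theorem convTerm_tail_mul_conv_succ_le (ha : ∀ i, 0 ≤ a i) (hb : LogConcavePMF b) (k j : ℕ) :
    (∑ t ∈ Ico j (k + 2), convTerm a b k t) * conv a b (k + 1) ≤
      (∑ t ∈ Ico j (k + 2), convTerm a b (k + 1) t) * conv a b k := by
  rw [← sum_convTerm (show k + 1 < k + 2 by omega), ← sum_convTerm (show k < k + 2 by omega)]
  exact sum_Ico_mul_sum_range_le_of_ratio (fun t s hts => convTerm_ratio_succ ha hb k hts) _ _

theorem convTerm_succ_tail_mul_conv_le (ha : LogConcavePMF a) (hb : ∀ i, 0 ≤ b i) (k j : ℕ) :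
    (∑ t ∈ Ico (j + 1) (k + 2), convTerm a b (k + 1) t) * conv a b k ≤
      (∑ t ∈ Ico j (k + 2), convTerm a b k t) * conv a b (k + 1) := by
  have hnn := convTerm_nonneg ha.1 hb
  have key := sum_Ico_mul_sum_range_le_of_ratio (x := convTerm a b k)
    (y := fun t => convTerm a b (k + 1) (t + 1)) (fun t s hts => convTerm_ratio_shift ha hb k hts)
    (k + 1) j
  rw [sum_Ico_add', sum_convTerm (show k < k + 1 by omega)] at key
  refine key.trans
    (mul_le_mul ?_ ?_ (sum_nonneg fun _ _ => hnn _ _) (sum_nonneg fun _ _ => hnn _ _))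
  · exact sum_le_sum_of_subset_of_nonneg (Ico_subset_Ico_right (by omega)) fun _ _ _ => hnn _ _
  · rw [← sum_convTerm (show k + 1 < k + 2 by omega), sum_range_succ' _ (k + 1)]
    exact le_add_of_nonneg_right (hnn _ _)

theorem sum_convTerm_mul_div {α : ℕ → ℕ → ℝ} (hαb : ∀ t m, b m = 0 → α t m = 0) {K N : ℕ}
    (hKN : K < N) : ∑ t ∈ range N, convTerm a b K t * (α t (K - t) / b (K - t)) =
      ∑ x ∈ antidiagonal K, a x.1 * α x.1 x.2 := by
  rw [← sum_range_ite_le_eq_sum_antidiagonal hKN fun i j => a i * α i j]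
  refine sum_congr rfl fun t _ => ?_
  simp only [convTerm, ite_mul, zero_mul]
  split_ifs
  · rcases eq_or_ne (b (K - t)) 0 with h0 | h0
    · rw [hαb t _ h0, h0]; simp
    · field_simp
  · rfl

end convTerm

def RatioMonotone (α b : ℕ → ℝ) : Prop := ∀ m, α m * b (m + 1) ≤ α (m + 1) * b m

/-- Efron's theorem for two variables, in a form that can be iterated: `α t m` plays the role of
`E[f(t, Y) ; S' = m]`, where `b` is the law of `S'`. -/
theorem ratioMonotone_conv {a b : ℕ → ℝ} {α : ℕ → ℕ → ℝ} (ha : LogConcavePMF a)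
    (hb : LogConcavePMF b) (hα : ∀ t, RatioMonotone (α t) b) (hαt : ∀ t m, α t m ≤ α (t + 1) m)
    (hαb : ∀ t m, b m = 0 → α t m = 0) :
    RatioMonotone (fun k => ∑ x ∈ antidiagonal k, a x.1 * α x.1 x.2) (conv a b) := by
  intro k
  set r : ℕ → ℕ → ℝ := fun t m => α t m / b m with hr
  have hr_succ : ∀ t m, 0 < b (m + 1) → r t m ≤ r t (m + 1) := fun t m hm => by
    rw [hr, div_le_div_iff₀ (hb.2.1 _ _ m.le_succ hm) hm]
    exact hα t m
  have key := sum_mul_le_sum_mul_of_tail_le (N := k + 2)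
    (p := fun t => convTerm a b k t * conv a b (k + 1))
    (q := fun t => convTerm a b (k + 1) t * conv a b k)
    (u := fun t => r t (k - t)) (v := fun t => r t (k + 1 - t))
    (by rw [← sum_mul, ← sum_mul, sum_convTerm (show k < k + 2 by omega),
      sum_convTerm (show k + 1 < k + 2 by omega), mul_comm])
    (fun j => by simpa only [← sum_mul] using convTerm_tail_mul_conv_succ_le ha.1 hb k j)
    (fun j => by simpa only [← sum_mul] using convTerm_succ_tail_mul_conv_le ha hb.1 k j)
    (fun t hq => by
      have hwpos := pos_of_mul_pos_left hq (conv_nonneg ha.1 hb.1 k)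
      have htk : t ≤ k + 1 := by
        by_contra h
        simp [convTerm, h] at hwpos
      simp only [convTerm, if_pos htk] at hwpos
      have hbpos : 0 < b (k + 1 - t) := pos_of_mul_pos_right hwpos (ha.1 t)
      rcases (show k + 1 - t = k - t + 1 ∨ k + 1 - t = k - t by omega) with h | h
      · rw [h] at hbpos ⊢; exact hr_succ t _ hbpos
      · rw [h])
    (fun t => by
      simp only [hr, show k + 1 - (t + 1) = k - t by omega]
      exact div_le_div_of_nonneg_right (hαt t _) (hb.1 _))
  simp only [mul_right_comm _ (conv a b _), ← sum_mul, hr] at key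
  rwa [sum_convTerm_mul_div hαb (by omega), sum_convTerm_mul_div hαb (by omega)] at key

theorem sum_finAntidiagonal_succ {M : Type*} [AddCommMonoid M] (n k : ℕ)
    (g : (Fin (n + 1) → ℕ) → M) :
    ∑ x ∈ finAntidiagonal (n + 1) k, g x =
      ∑ p ∈ antidiagonal k, ∑ y ∈ finAntidiagonal n p.2, g (Fin.cons p.1 y) := by
  rw [finAntidiagonal, finAntidiagonal.aux, sum_disjiUnion]
  simp only [sum_map]
  rfl

/-- `E[g(X) ; S = k]` for independent `Xᵢ ∼ νᵢ`. -/
noncomputable def sliceSum {n : ℕ} (ν : Fin n → ℕ → ℝ) (g : (Fin n → ℕ) → ℝ) (k : ℕ) : ℝ :=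
  ∑ x ∈ finAntidiagonal n k, g x * ∏ i, ν i (x i)

section sliceSum

variable {n : ℕ}

theorem tsum_ite_eq_sliceSum (ν : Fin n → ℕ → ℝ) (g : (Fin n → ℕ) → ℝ) (k : ℕ) :
    ∑' x : Fin n → ℕ, (if ∑ i, x i = k then g x * ∏ i, ν i (x i) else 0) = sliceSum ν g k := by
  rw [tsum_eq_sum fun x hx => if_neg (mt mem_finAntidiagonal.2 hx)]
  exact sum_congr rfl fun x hx => if_pos (mem_finAntidiagonal.1 hx)

theorem sumLaw_eq_sliceSum_one (ν : Fin n → ℕ → ℝ) (k : ℕ) : sumLaw ν k = sliceSum ν 1 k := by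
  rw [sumLaw, ← tsum_ite_eq_sliceSum]
  simp only [Pi.one_apply, one_mul]

theorem sliceSum_zero_succ (ν : Fin 0 → ℕ → ℝ) (g : (Fin 0 → ℕ) → ℝ) (k : ℕ) :
    sliceSum ν g (k + 1) = 0 :=
  sum_eq_zero fun x hx => by simp [mem_finAntidiagonal] at hx

theorem sliceSum_succ (ν : Fin (n + 1) → ℕ → ℝ) (g : (Fin (n + 1) → ℕ) → ℝ) (k : ℕ) :
    sliceSum ν g k =
      ∑ p ∈ antidiagonal k, ν 0 p.1 * sliceSum (Fin.tail ν) (fun y => g (Fin.cons p.1 y)) p.2 := by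
  simp only [sliceSum, sum_finAntidiagonal_succ, mul_sum, Fin.prod_univ_succ, Fin.cons_zero,
    Fin.cons_succ, Fin.tail]
  exact sum_congr rfl fun p _ => sum_congr rfl fun y _ => by ring

variable {ν : Fin n → ℕ → ℝ}

theorem sliceSum_le_sliceSum (hν : ∀ i t, 0 ≤ ν i t) {g h : (Fin n → ℕ) → ℝ}
    (hgh : ∀ x, g x ≤ h x) (k : ℕ) : sliceSum ν g k ≤ sliceSum ν h k :=
  sum_le_sum fun x _ => mul_le_mul_of_nonneg_right (hgh x) (prod_nonneg fun i _ => hν i _)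

theorem sliceSum_eq_zero_of_sliceSum_one (hν : ∀ i t, 0 ≤ ν i t) (g : (Fin n → ℕ) → ℝ) {k : ℕ}
    (h : sliceSum ν 1 k = 0) : sliceSum ν g k = 0 := by
  have hw := (sum_eq_zero_iff_of_nonneg fun x _ => by
    simpa using prod_nonneg fun i _ => hν i (x i)).1 h
  exact sum_eq_zero fun x hx => by simpa using Or.inr (hw x hx)

end sliceSum

theorem logConcavePMF_sliceSum_one {n : ℕ} {ν : Fin n → ℕ → ℝ}
    (hν : ∀ i, LogConcavePMF (ν i)) : LogConcavePMF (sliceSum ν 1) := by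
  induction n with
  | zero =>
    refine ⟨fun k => sum_nonneg fun x _ => by simp, fun x y hxy hy => ?_, fun x => ?_⟩
    · obtain rfl : y = 0 := by
        by_contra h
        obtain ⟨y, rfl⟩ := Nat.exists_eq_succ_of_ne_zero h
        simp [sliceSum_zero_succ] at hy
      rwa [Nat.le_zero.1 hxy]
    · rw [sliceSum_zero_succ, mul_zero]
      exact sq_nonneg _
  | succ n ih =>
    have : sliceSum ν 1 = conv (ν 0) (sliceSum (Fin.tail ν) 1) := funext (sliceSum_succ ν 1)
    rw [this]
    exact (hν 0).conv (ih fun i => hν i.succ)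

theorem ratioMonotone_sliceSum {n : ℕ} {ν : Fin n → ℕ → ℝ} (hν : ∀ i, LogConcavePMF (ν i))
    {f : (Fin n → ℕ) → ℝ} (hf : Monotone f) : RatioMonotone (sliceSum ν f) (sliceSum ν 1) := by
  induction n with
  | zero => intro k; simp [sliceSum_zero_succ]
  | succ n ih =>
    have hsucc : ∀ i, LogConcavePMF (Fin.tail ν i) := fun i => hν i.succ
    rw [funext (sliceSum_succ ν f), show sliceSum ν 1 = conv (ν 0) (sliceSum (Fin.tail ν) 1) from
      funext (sliceSum_succ ν 1)]
    refine ratioMonotone_conv (α := fun t => sliceSum (Fin.tail ν) fun y => f (Fin.cons t y))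
      (hν 0) (logConcavePMF_sliceSum_one hsucc) (fun t => ?_) (fun t m => ?_)
      (fun t m => sliceSum_eq_zero_of_sliceSum_one (fun i => (hsucc i).1) _)
    · exact ih hsucc fun y y' hy => hf (Fin.cons_le_cons.2 ⟨le_rfl, hy⟩)
    · exact sliceSum_le_sliceSum (fun i => (hsucc i).1)
        (fun y => hf (Fin.cons_le_cons.2 ⟨t.le_succ, le_rfl⟩)) m

theorem efron_general {n : ℕ} (ν : Fin n → ℕ → ℝ)
    (hlc : ∀ i, LogConcavePMF (ν i))
    (k : ℕ) (hk : 0 < sumLaw ν k) (hk' : 0 < sumLaw ν (k + 1))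
    (f : (Fin n → ℕ) → ℝ) (hf : Monotone f) :
    (∑' x : Fin n → ℕ, if (∑ i, x i) = k then f x * ∏ i, ν i (x i) else 0) /
        sumLaw ν k ≤
      (∑' x : Fin n → ℕ, if (∑ i, x i) = k + 1 then f x * ∏ i, ν i (x i) else 0) /
        sumLaw ν (k + 1) := by
  rw [tsum_ite_eq_sliceSum, tsum_ite_eq_sliceSum, div_le_div_iff₀ hk hk',
    sumLaw_eq_sliceSum_one, sumLaw_eq_sliceSum_one]
  exact ratioMonotone_sliceSum hlc hf k

/-- Efron's theorem, general `n`, discrete case: for independent `X₁,…,Xₙ`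
with log-concave laws, the canonical measures (laws of `(X₁,…,Xₙ)` given
`Sₙ = k`) are stochastically increasing in `k`: for every bounded
coordinatewise-increasing `f : ℕⁿ → ℝ`,
`E[f(𝐗ₙ) | Sₙ = k] ≤ E[f(𝐗ₙ) | Sₙ = k+1]`. -/
theorem efron {n : ℕ} (ν : Fin n → ℕ → ℝ)
    (hlc : ∀ i, LogConcavePMF (ν i)) (hs : ∀ i, HasSum (ν i) 1)
    (k : ℕ) (hk : 0 < sumLaw ν k) (hk' : 0 < sumLaw ν (k + 1))
    (f : (Fin n → ℕ) → ℝ) (hf : Monotone f) (hfb : ∃ C, ∀ x, |f x| ≤ C) :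
    (∑' x : Fin n → ℕ, if (∑ i, x i) = k then f x * ∏ i, ν i (x i) else 0) /
        sumLaw ν k ≤
      (∑' x : Fin n → ℕ, if (∑ i, x i) = k + 1 then f x * ∏ i, ν i (x i) else 0) /
        sumLaw ν (k + 1) :=
  efron_general ν hlc k hk hk' f hf
end

section
/- (Sandwich lemma for stochastic domination) Let (μₙ) be a sequence of probability measures on ℕ^ℓ and μ a probability measure on ℕ^ℓ. Suppose for every ε > 0 there exist sequences (αₙ), (βₙ) of probability measures with αₙ ≼ μₙ ≼ βₙ (stochastic domination in the coordinatewise order) and αₙ → α, βₙ → β weakly, where α ≼ μ ≼ β and α, β can be taken converging to μ (i.e., for every bounded increasing f, |∫f dα − ∫f dμ| < ε and |∫f dβ − ∫f dμ| < ε). Then μₙ → μ weakly. -/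
/-!
By Scheffé's lemma, pointwise convergence of probability mass functions is convergence in
`ℓ¹`, so it carries the integrals of every bounded test function along. For a
bounded increasing `f` the sandwich `∫ f daₙ ≤ ∫ f dμₙ ≤ ∫ f dbₙ` therefore traps `∫ f dμₙ`
eventually within `ε` of `∫ f dμ`. Weak convergence follows because the point mass at `x` is the
difference of the integrals of the increasing indicators of `Ici x` and `Ioi x`.
-/

open scoped BigOperators
open Filter

/-- A probability mass function on `ℕ^ℓ`. -/
def IsPMF {ℓ : ℕ} (p : (Fin ℓ → ℕ) → ℝ) : Prop :=
  (∀ x, 0 ≤ p x) ∧ HasSum p 1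

/-- Stochastic domination in the coordinatewise order on `ℕ^ℓ`:
`p ≼ q` iff `∫ f dp ≤ ∫ f dq` for every bounded coordinatewise-increasing `f`. -/
def StochDom {ℓ : ℕ} (p q : (Fin ℓ → ℕ) → ℝ) : Prop :=
  ∀ f : (Fin ℓ → ℕ) → ℝ, Monotone f → (∃ C, ∀ x, |f x| ≤ C) →
    (∑' x, f x * p x) ≤ ∑' x, f x * q x

open Set Topology

section Scheffe

variable {ι : Type*}

lemma Summable.mul_of_abs_le {f p : ι → ℝ} {C : ℝ} (hp : Summable p) (hf : ∀ x, |f x| ≤ C) :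
    Summable fun x => f x * p x :=
  .of_norm_bounded (hp.abs.mul_left C) fun x => by
    rw [Real.norm_eq_abs, abs_mul]
    exact mul_le_mul_of_nonneg_right (hf x) (abs_nonneg _)

lemma abs_tsum_mul_sub_tsum_mul_le {f p q : ι → ℝ} {C : ℝ} (hp : Summable p) (hq : Summable q)
    (hf : ∀ x, |f x| ≤ C) :
    |∑' x, f x * p x - ∑' x, f x * q x| ≤ C * ∑' x, |p x - q x| := by
  have hpq : Summable fun x => f x * (p x - q x) := (hp.sub hq).mul_of_abs_le hf
  calc |∑' x, f x * p x - ∑' x, f x * q x|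
      = |∑' x, f x * (p x - q x)| := by
        rw [← (hp.mul_of_abs_le hf).tsum_sub (hq.mul_of_abs_le hf)]
        simp only [mul_sub]
    _ ≤ ∑' x, |f x * (p x - q x)| := by
        simpa only [Real.norm_eq_abs] using norm_tsum_le_tsum_norm hpq.norm
    _ ≤ ∑' x, C * |p x - q x| := by
        refine hpq.abs.tsum_le_tsum (fun x => ?_) ((hp.sub hq).abs.mul_left C)
        rw [abs_mul]
        exact mul_le_mul_of_nonneg_right (hf x) (abs_nonneg _)
    _ = C * ∑' x, |p x - q x| := tsum_mul_left

lemma tendsto_tsum_abs_sub_of_tendsto {p : ℕ → ι → ℝ} {q : ι → ℝ} {s : ℝ}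
    (hp₀ : ∀ n x, 0 ≤ p n x) (hp : ∀ n, HasSum (p n) s) (hq : HasSum q s)
    (hlim : ∀ x, Tendsto (fun n => p n x) atTop (𝓝 (q x))) :
    Tendsto (fun n => ∑' x, |p n x - q x|) atTop (𝓝 0) := by
  have hq₀ : ∀ x, 0 ≤ q x := fun x => ge_of_tendsto' (hlim x) (hp₀ · x)
  have hdom : ∀ n x, (p n x - q x)⁻ ≤ q x := fun n x => by
    rw [negPart_def]; exact sup_le (by linarith [hp₀ n x]) (hq₀ x)
  have hneg : Tendsto (fun n => ∑' x, (p n x - q x)⁻) atTop (𝓝 0) := by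
    have hlim' : ∀ x, Tendsto (fun n => (p n x - q x)⁻) atTop (𝓝 0) := fun x => by
      have := continuous_negPart.continuousAt.tendsto.comp ((hlim x).sub_const (q x))
      rwa [sub_self, negPart_zero] at this
    simpa using tendsto_tsum_of_dominated_convergence hq.summable hlim'
      (.of_forall fun n x => by rw [Real.norm_of_nonneg (negPart_nonneg _)]; exact hdom n x)
  have hL1 : ∀ n, ∑' x, |p n x - q x| = 2 * ∑' x, (p n x - q x)⁻ := by
    intro n
    have hsub := (hp n).sub hq
    rw [sub_self] at hsub
    have hnegsum : Summable fun x => (p n x - q x)⁻ :=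
      hq.summable.of_nonneg_of_le (fun x => negPart_nonneg _) (hdom n)
    calc ∑' x, |p n x - q x| = ∑' x, (p n x - q x + 2 * (p n x - q x)⁻) := by
          congr 1; ext x
          linarith [abs_sub_eq_two_nsmul_negPart (p n x - q x), two_nsmul ((p n x - q x)⁻)]
      _ = 2 * ∑' x, (p n x - q x)⁻ := by
          rw [hsub.summable.tsum_add (hnegsum.mul_left 2), hsub.tsum_eq, zero_add, tsum_mul_left]
  simpa [hL1] using hneg.const_mul 2

lemma tendsto_tsum_mul_of_tendsto {p : ℕ → ι → ℝ} {q f : ι → ℝ} {s C : ℝ}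
    (hp₀ : ∀ n x, 0 ≤ p n x) (hp : ∀ n, HasSum (p n) s) (hq : HasSum q s)
    (hlim : ∀ x, Tendsto (fun n => p n x) atTop (𝓝 (q x))) (hf : ∀ x, |f x| ≤ C) :
    Tendsto (fun n => ∑' x, f x * p n x) atTop (𝓝 (∑' x, f x * q x)) := by
  rw [tendsto_iff_norm_sub_tendsto_zero]
  refine squeeze_zero (fun n => norm_nonneg _)
    (fun n => abs_tsum_mul_sub_tsum_mul_le (hp n).summable hq.summable hf) ?_
  simpa using (tendsto_tsum_abs_sub_of_tendsto hp₀ hp hq hlim).const_mul C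

end Scheffe

lemma tendsto_of_forall_sandwich {ι : Type*} {l : Filter ι} {u : ι → ℝ} {L : ℝ}
    (h : ∀ ε > 0, ∃ (a b : ι → ℝ) (A B : ℝ), (∀ n, a n ≤ u n ∧ u n ≤ b n) ∧
      Tendsto a l (𝓝 A) ∧ Tendsto b l (𝓝 B) ∧ L - ε < A ∧ B < L + ε) :
    Tendsto u l (𝓝 L) := by
  refine tendsto_order.2 ⟨fun c hc => ?_, fun c hc => ?_⟩
  · obtain ⟨a, _, A, _, hab, ha, -, hA, -⟩ := h (L - c) (by linarith)
    filter_upwards [ha.eventually (eventually_gt_nhds (by linarith : c < A))] with n hn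
    exact hn.trans_le (hab n).1
  · obtain ⟨_, b, _, B, hab, -, hb, -, hB⟩ := h (c - L) (by linarith)
    filter_upwards [hb.eventually (eventually_lt_nhds (by linarith : B < c))] with n hn
    exact (hab n).2.trans_lt hn

section Indicator

variable {X : Type*}

lemma IsUpperSet.monotone_indicator_one [Preorder X] {s : Set X} (hs : IsUpperSet s) :
    Monotone (s.indicator (1 : X → ℝ)) := by
  intro y z hyz
  by_cases hy : y ∈ s
  · simp [hy, hs hyz hy]
  · simp [hy, indicator_nonneg]

lemma abs_indicator_one_le_one (s : Set X) (y : X) : |s.indicator (1 : X → ℝ) y| ≤ 1 := by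
  by_cases hy : y ∈ s <;> simp [hy]

lemma tsum_indicator_Ici_mul_sub_tsum_indicator_Ioi_mul [PartialOrder X] {p : X → ℝ}
    (hp : Summable p) (x : X) :
    ∑' y, (Ici x).indicator 1 y * p y - ∑' y, (Ioi x).indicator 1 y * p y = p x := by
  classical
  have hmul : ∀ s : Set X, (fun y => s.indicator 1 y * p y) = s.indicator p := by
    intro s; ext y; by_cases hy : y ∈ s <;> simp [hy]
  rw [hmul, hmul, ← (hp.indicator _).tsum_sub (hp.indicator _), ← Pi.sub_def,
    ← indicator_sdiff Ioi_subset_Ici_self, Ici_sdiff_Ioi_same, indicator_singleton, tsum_pi_single]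

end Indicator

/-- Sandwich lemma for stochastic domination: if for every `ε > 0` there are
pmf sequences `aₙ ≼ μₙ ≼ bₙ` converging weakly (pointwise) to `α`, `β` with
`α ≼ μ ≼ β` and `α`, `β` within `ε` of `μ` on every bounded increasing test
function, then `μₙ → μ` weakly (pointwise). -/
theorem sandwich_stochastic_domination {ℓ : ℕ}
    (μseq : ℕ → (Fin ℓ → ℕ) → ℝ) (μ : (Fin ℓ → ℕ) → ℝ)
    (hμseq : ∀ n, IsPMF (μseq n)) (hμ : IsPMF μ)
    (h : ∀ ε : ℝ, 0 < ε →
      ∃ (α β : (Fin ℓ → ℕ) → ℝ) (a b : ℕ → (Fin ℓ → ℕ) → ℝ),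
        IsPMF α ∧ IsPMF β ∧
        (∀ n, IsPMF (a n) ∧ IsPMF (b n) ∧
          StochDom (a n) (μseq n) ∧ StochDom (μseq n) (b n)) ∧
        (∀ x, Tendsto (fun n => a n x) atTop (nhds (α x))) ∧
        (∀ x, Tendsto (fun n => b n x) atTop (nhds (β x))) ∧
        StochDom α μ ∧ StochDom μ β ∧
        (∀ f : (Fin ℓ → ℕ) → ℝ, Monotone f → (∃ C, ∀ x, |f x| ≤ C) →
          |(∑' x, f x * α x) - ∑' x, f x * μ x| < ε ∧
          |(∑' x, f x * β x) - ∑' x, f x * μ x| < ε)) :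
    ∀ x, Tendsto (fun n => μseq n x) atTop (nhds (μ x)) := by
  have htest : ∀ f : (Fin ℓ → ℕ) → ℝ, Monotone f → ∀ C, (∀ y, |f y| ≤ C) →
      Tendsto (fun n => ∑' y, f y * μseq n y) atTop (𝓝 (∑' y, f y * μ y)) := by
    intro f hf C hC
    refine tendsto_of_forall_sandwich fun ε hε => ?_
    obtain ⟨α, β, a, b, hα, hβ, hab, ha, hb, -, -, hclose⟩ := h ε hε
    obtain ⟨hαε, hβε⟩ := hclose f hf ⟨C, hC⟩
    exact ⟨_, _, _, _, fun n => ⟨(hab n).2.2.1 f hf ⟨C, hC⟩, (hab n).2.2.2 f hf ⟨C, hC⟩⟩,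
      tendsto_tsum_mul_of_tendsto (fun n => (hab n).1.1) (fun n => (hab n).1.2) hα.2 ha hC,
      tendsto_tsum_mul_of_tendsto (fun n => (hab n).2.1.1) (fun n => (hab n).2.1.2) hβ.2 hb hC,
      by linarith [(abs_lt.1 hαε).1], by linarith [(abs_lt.1 hβε).2]⟩
  intro x
  have hIci := htest _ (isUpperSet_Ici x).monotone_indicator_one 1 (abs_indicator_one_le_one _)
  have hIoi := htest _ (isUpperSet_Ioi x).monotone_indicator_one 1 (abs_indicator_one_le_one _)
  have hpoint := hIci.sub hIoi
  rw [tsum_indicator_Ici_mul_sub_tsum_indicator_Ioi_mul hμ.2.summable] at hpoint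
  exact hpoint.congr fun n =>
    tsum_indicator_Ici_mul_sub_tsum_indicator_Ioi_mul (hμseq n).2.summable x
end

section
/- (Monotonicity of the basic coupling rates) For the misanthrope-type particle system with jump rates r(𝐱, θ^{ij}𝐱) = gᵢ(xᵢ)·1{x_j < max_j}, if each gᵢ is nondecreasing on [0, maxᵢ] with gᵢ(0) = 0, then every transition of the basic coupling with positive rate maps an ordered pair of configurations (𝐱 ≤ 𝐱′ coordinatewise) to an ordered pair (𝐳 ≤ 𝐳′). -/
open scoped BigOperators
open scoped Classical

/-- Move one particle from site `i` to site `j`. -/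
def moveP {n : ℕ} (x : Fin n → ℕ) (i j : Fin n) : Fin n → ℕ :=
  fun h => x h - (if h = i then 1 else 0) + (if h = j then 1 else 0)

/-- Basic coupling rates for the misanthrope-type particle system with jump
rates `r(x, θ^{ij}x) = gᵢ(xᵢ)·1{x_j < max_j}`: joint jumps at the minimum
rate `gᵢ(xᵢ) ∧ gᵢ(xᵢ')` when both target sites admit the particle, lone jumps
of the unblocked coordinate at the minimum rate when the other coordinate's
target site is full, and residual lone jumps at rates `(gᵢ(xᵢ') - gᵢ(xᵢ))⁺`
and `(gᵢ(xᵢ) - gᵢ(xᵢ'))⁺`. -/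
noncomputable def basicCouplingRate {n : ℕ} (g : Fin n → ℕ → ℝ) (mx : Fin n → ℕ)
    (p u : (Fin n → ℕ) × (Fin n → ℕ)) : ℝ :=
  ∑ i : Fin n, ∑ j : Fin n,
    if i ≠ j then
      (if u = (moveP p.1 i j, moveP p.2 i j) ∧ 1 ≤ p.1 i ∧ 1 ≤ p.2 i ∧
          p.1 j < mx j ∧ p.2 j < mx j
        then min (g i (p.1 i)) (g i (p.2 i)) else 0) +
      (if u = (p.1, moveP p.2 i j) ∧ 1 ≤ p.2 i ∧ p.1 j = mx j ∧ p.2 j < mx j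
        then min (g i (p.1 i)) (g i (p.2 i)) else 0) +
      (if u = (moveP p.1 i j, p.2) ∧ 1 ≤ p.1 i ∧ p.1 j < mx j ∧ p.2 j = mx j
        then min (g i (p.1 i)) (g i (p.2 i)) else 0) +
      (if u = (p.1, moveP p.2 i j) ∧ 1 ≤ p.2 i ∧ p.2 j < mx j
        then max (g i (p.2 i) - g i (p.1 i)) 0 else 0) +
      (if u = (moveP p.1 i j, p.2) ∧ 1 ≤ p.1 i ∧ p.1 j < mx j
        then max (g i (p.1 i) - g i (p.2 i)) 0 else 0)
    else 0

/-!
Each of the five kinds of coupled move keeps an ordered pair ordered. Joint moves do because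
`moveP · i j` is monotone. A lone move of the first coordinate, blocked for the second, happens
only when the second is full at `j`, so the first sits strictly below it there. A residual lone
move of the second coordinate has positive rate only when `gᵢ(xᵢ) < gᵢ(xᵢ')`, which forces
`xᵢ < xᵢ'`. The other two moves have rate zero on ordered pairs: the first coordinate cannot be
full at `j` while the second is not, and `gᵢ(xᵢ) ≤ gᵢ(xᵢ')` by monotonicity of `gᵢ`.
-/

section moveP

variable {n : ℕ}

theorem moveP_mono (i j : Fin n) : Monotone fun x : Fin n → ℕ => moveP x i j := by
  intro x y hxy h
  have hh : x h ≤ y h := hxy h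
  simp only [moveP]
  split_ifs <;> omega

theorem moveP_le_of_lt {x y : Fin n → ℕ} {i j : Fin n} (hxy : x ≤ y) (hj : x j < y j) :
    moveP x i j ≤ y := by
  intro h
  have hh : x h ≤ y h := hxy h
  simp only [moveP]
  split_ifs <;> subst_vars <;> omega

theorem le_moveP_of_lt {x y : Fin n → ℕ} {i j : Fin n} (hxy : x ≤ y) (hi : x i < y i) :
    x ≤ moveP y i j := by
  intro h
  have hh : x h ≤ y h := hxy h
  simp only [moveP]
  split_ifs <;> subst_vars <;> omega

end moveP

theorem pos_or_pos_of_add_pos {α : Type*} [AddZeroClass α] [LinearOrder α] [AddLeftMono α]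
    {a b : α} (h : 0 < a + b) : 0 < a ∨ 0 < b := by
  by_contra! hab
  exact h.not_ge (add_nonpos hab.1 hab.2)

theorem ite_zero_pos_iff {α : Type*} [Zero α] [Preorder α] {c : Prop} [Decidable c] {a : α} :
    (0 < if c then a else 0) ↔ c ∧ 0 < a := by
  split_ifs with hc <;> simp [hc]

theorem exists_of_basicCouplingRate_pos {n : ℕ} {g : Fin n → ℕ → ℝ} {mx : Fin n → ℕ}
    {p u : (Fin n → ℕ) × (Fin n → ℕ)} (hpos : 0 < basicCouplingRate g mx p u) :
    ∃ i j, u = (moveP p.1 i j, moveP p.2 i j) ∨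
      (u = (p.1, moveP p.2 i j) ∧ p.1 j = mx j ∧ p.2 j < mx j) ∨
      (u = (moveP p.1 i j, p.2) ∧ p.1 j < mx j ∧ p.2 j = mx j) ∨
      (u = (p.1, moveP p.2 i j) ∧ g i (p.1 i) < g i (p.2 i)) ∨
      (u = (moveP p.1 i j, p.2) ∧ g i (p.2 i) < g i (p.1 i)) := by
  obtain ⟨i, -, hi⟩ := Finset.exists_lt_of_sum_lt (Finset.sum_const_zero.trans_lt hpos)
  obtain ⟨j, -, hj⟩ := Finset.exists_lt_of_sum_lt (Finset.sum_const_zero.trans_lt hi)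
  refine ⟨i, j, ?_⟩
  obtain ⟨-, hj⟩ := ite_zero_pos_iff.mp hj
  obtain (((hA | hB) | hC) | hD) | hE := (pos_or_pos_of_add_pos hj).imp_left fun h ↦
    (pos_or_pos_of_add_pos h).imp_left fun h ↦
      (pos_or_pos_of_add_pos h).imp_left pos_or_pos_of_add_pos
  · exact Or.inl (ite_zero_pos_iff.mp hA).1.1
  · obtain ⟨⟨hu, -, h₁, h₂⟩, -⟩ := ite_zero_pos_iff.mp hB
    exact Or.inr <| Or.inl ⟨hu, h₁, h₂⟩
  · obtain ⟨⟨hu, -, h₁, h₂⟩, -⟩ := ite_zero_pos_iff.mp hC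
    exact Or.inr <| Or.inr <| Or.inl ⟨hu, h₁, h₂⟩
  · obtain ⟨⟨hu, -⟩, hrate⟩ := ite_zero_pos_iff.mp hD
    exact Or.inr <| Or.inr <| Or.inr <| Or.inl ⟨hu, by simpa using hrate⟩
  · obtain ⟨⟨hu, -⟩, hrate⟩ := ite_zero_pos_iff.mp hE
    exact Or.inr <| Or.inr <| Or.inr <| Or.inr ⟨hu, by simpa using hrate⟩

theorem basicCoupling_monotone_general {n : ℕ} (g : Fin n → ℕ → ℝ) (mx : Fin n → ℕ)
    (hgmono : ∀ i, ∀ z z' : ℕ, z ≤ z' → z' ≤ mx i → g i z ≤ g i z') :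
    ∀ p u : (Fin n → ℕ) × (Fin n → ℕ),
      (∀ h, p.1 h ≤ mx h) → (∀ h, p.2 h ≤ mx h) → p.1 ≤ p.2 →
      0 < basicCouplingRate g mx p u → u.1 ≤ u.2 := by
  intro p u _ hp₂ hle hpos
  obtain ⟨i, j, rfl | ⟨rfl, hfull, hfree⟩ | ⟨rfl, hfree, hfull⟩ | ⟨rfl, hg⟩ |
      ⟨-, hg⟩⟩ := exists_of_basicCouplingRate_pos hpos
  · exact moveP_mono i j hle
  · have hj : p.1 j ≤ p.2 j := hle j
    omega
  · have hj : p.1 j ≤ p.2 j := hle j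
    exact moveP_le_of_lt (y := p.2) hle (by omega)
  · exact le_moveP_of_lt hle <|
      lt_of_le_of_ne (hle i) fun heq ↦ hg.ne (congrArg (g i) heq)
  · exact absurd (hgmono i _ _ (hle i) (hp₂ i)) hg.not_ge

/-- Monotonicity of the basic coupling: if each rate function `gᵢ` is
nondecreasing on `[0, maxᵢ]` with `gᵢ(0) = 0` and `gᵢ ≥ 0`, then every
transition of the basic coupling with positive rate maps an ordered pair of
configurations in the state space `∏ᵢ [0, maxᵢ]` to an ordered pair. -/
theorem basicCoupling_monotone {n : ℕ} (g : Fin n → ℕ → ℝ) (mx : Fin n → ℕ)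
    (hg0 : ∀ i, g i 0 = 0) (hgpos : ∀ i z, 0 ≤ g i z)
    (hgmono : ∀ i, ∀ z z' : ℕ, z ≤ z' → z' ≤ mx i → g i z ≤ g i z') :
    ∀ p u : (Fin n → ℕ) × (Fin n → ℕ),
      (∀ h, p.1 h ≤ mx h) → (∀ h, p.2 h ≤ mx h) → p.1 ≤ p.2 →
      0 < basicCouplingRate g mx p u → u.1 ≤ u.2 :=
  basicCoupling_monotone_general g mx hgmono
end
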